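/- arXiv:1702.05554 — 5 statements merged into one kernel-verified Lean document; each statement's English description precedes it below -/
import Mathlib

section
/- Let $k$ be a field of characteristic $0$ and let $f(x,y) \in k[[x,y]]$ be a formal power series in two variables. Then there exists a unique formal power series $y \in x\,k[[x]]$ (i.e. with zero constant term) such that $y' = f(x,y)$, where $y'$ denotes the formal derivative of $y$ and $f(x,y)$ denotes substitution of $y$ into the second variable of $f$. -/
open PowerSeries

/-- Substitution of a one-variable power series `g` (with zero constant term) into the
second variable of a two-variable power series `f`, and of `X` into the first variable:
the coefficient of `x^n` in `f(x, g)`. -/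
noncomputable def substXY {k : Type*} [Field k] (f : MvPowerSeries (Fin 2) k)
    (g : PowerSeries k) : PowerSeries k :=
  PowerSeries.mk fun n =>
    ∑ p ∈ Finset.range (n + 1) ×ˢ Finset.range (n + 1),
      MvPowerSeries.coeff (Finsupp.single (0 : Fin 2) p.1 + Finsupp.single (1 : Fin 2) p.2) f
        * PowerSeries.coeff (n - p.1) (g ^ p.2)

/-!
Comparing coefficients of `x^n`, the equation `y' = f(x, y)` reads
`(n + 1) y_{n+1} = [x^n] f(x, y)`, and `[x^n] f(x, y)` only involves `y_0, …, y_n`.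
Together with `y_0 = 0` this is a recursion that determines every coefficient of `y`,
and characteristic `0` makes the division by `n + 1` possible.
-/

namespace PowerSeries

theorem coeff_pow_congr {R : Type*} [CommSemiring R] {g₁ g₂ : R⟦X⟧} {n : ℕ}
    (h : ∀ i ≤ n, coeff i g₁ = coeff i g₂) (j : ℕ) {m : ℕ} (hm : m ≤ n) :
    coeff m (g₁ ^ j) = coeff m (g₂ ^ j) := by
  have htrunc : trunc (n + 1) g₁ = trunc (n + 1) g₂ := by
    ext i
    simp only [coeff_trunc]
    split_ifs with hi
    exacts [h i (Nat.lt_succ_iff.mp hi), rfl]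
  have hm' : m < n + 1 := Nat.lt_succ_of_le hm
  rw [← coeff_coe_trunc_of_lt hm', ← trunc_trunc_pow, htrunc, trunc_trunc_pow,
    coeff_coe_trunc_of_lt hm']

theorem derivative_eq_iff {K : Type*} [Field K] [CharZero K] {y g : K⟦X⟧} :
    derivative K y = g ↔ ∀ n : ℕ, coeff (n + 1) y = ((n : K) + 1)⁻¹ * coeff n g := by
  have hne (n : ℕ) : (n : K) + 1 ≠ 0 := Nat.cast_add_one_ne_zero n
  refine ⟨fun h n => ?_, fun h => ?_⟩
  · rw [← h, coeff_derivative, mul_comm _ ((n : K) + 1), inv_mul_cancel_left₀ (hne n)]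
  · ext n
    rw [coeff_derivative, h n, mul_comm, mul_inv_cancel_left₀ (hne n)]

end PowerSeries

section FormalODE

variable {k : Type*} [Field k]

theorem coeff_substXY_congr (f : MvPowerSeries (Fin 2) k) {g₁ g₂ : k⟦X⟧} {n : ℕ}
    (h : ∀ i ≤ n, coeff i g₁ = coeff i g₂) :
    coeff n (substXY f g₁) = coeff n (substXY f g₂) := by
  simp only [substXY, coeff_mk]
  exact Finset.sum_congr rfl fun p _ => by rw [coeff_pow_congr h p.2 (Nat.sub_le n p.1)]

theorem eq_of_derivative_eq_substXY [CharZero k] (f : MvPowerSeries (Fin 2) k)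
    {y z : k⟦X⟧} (hy₀ : constantCoeff y = 0) (hz₀ : constantCoeff z = 0)
    (hy : derivative k y = substXY f y) (hz : derivative k z = substXY f z) : y = z := by
  rw [derivative_eq_iff] at hy hz
  ext n
  induction n using Nat.strong_induction_on with
  | _ n ih =>
    match n with
    | 0 => simp only [coeff_zero_eq_constantCoeff_apply, hy₀, hz₀]
    | m + 1 =>
      rw [hy m, hz m, coeff_substXY_congr f fun i hi => ih i (Nat.lt_succ_of_le hi)]

-- The cut-off at `n` only makes the recursion well founded: `[x^n] f(x, y)` ignores `y_i`, `i > n`.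
noncomputable def odeSolutionCoeff (f : MvPowerSeries (Fin 2) k) : ℕ → k
  | 0 => 0
  | n + 1 =>
      ((n : k) + 1)⁻¹ *
        coeff n (substXY f (mk fun i => if i ≤ n then odeSolutionCoeff f i else 0))

noncomputable def odeSolution (f : MvPowerSeries (Fin 2) k) : k⟦X⟧ :=
  mk (odeSolutionCoeff f)

theorem constantCoeff_odeSolution (f : MvPowerSeries (Fin 2) k) :
    constantCoeff (odeSolution f) = 0 := by
  rw [← coeff_zero_eq_constantCoeff_apply, odeSolution, coeff_mk, odeSolutionCoeff]

theorem derivative_odeSolution [CharZero k] (f : MvPowerSeries (Fin 2) k) :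
    derivative k (odeSolution f) = substXY f (odeSolution f) := by
  refine derivative_eq_iff.mpr fun n => ?_
  rw [odeSolution, coeff_mk, odeSolutionCoeff]
  congr 1
  exact coeff_substXY_congr f fun i hi => by rw [coeff_mk, coeff_mk, if_pos hi]

end FormalODE

/-- **Picard–Lindelöf for formal power series.**  Over a field of characteristic `0`,
for any `f ∈ k[[x,y]]` there is a unique `y ∈ x·k[[x]]` with `y' = f(x, y)`. -/
theorem formal_ode_unique {k : Type*} [Field k] [CharZero k]
    (f : MvPowerSeries (Fin 2) k) :
    ∃! y : PowerSeries k,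
      PowerSeries.constantCoeff y = 0 ∧ y.derivativeFun = substXY f y :=
  ⟨odeSolution f, ⟨constantCoeff_odeSolution f, derivative_odeSolution f⟩,
    fun _ ⟨hz₀, hz⟩ => eq_of_derivative_eq_substXY f hz₀ (constantCoeff_odeSolution f) hz
      (derivative_odeSolution f)⟩
end

section
/- Let $k$ be a field and equip $k[[x]]$ with the $x$-adic norm $\|g\|_v = e^{-v(g)}$ where $v$ is the $x$-adic valuation. Let $f \in k[[x,y]]$ and assume $\mathrm{char}(k)=0$. Then the map $\varphi : x k[[x]] \to x k[[x]]$ sending $y$ to the formal antiderivative with zero constant term of $f(x,y)$ is a contraction: $\|\varphi(y_1)-\varphi(y_0)\|_v \le e^{-1}\|y_1-y_0\|_v$ for all $y_0, y_1 \in x k[[x]]$. -/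
open PowerSeries

/-- The formal antiderivative with zero constant term, `∑ aₙ xⁿ ↦ ∑ (aₙ/(n+1)) xⁿ⁺¹`. -/
noncomputable def formalAntideriv {k : Type*} [Field k] (g : PowerSeries k) : PowerSeries k :=
  PowerSeries.mk fun n => if n = 0 then 0 else PowerSeries.coeff (n - 1) g / (n : k)

/-- The `x`-adic norm `‖g‖ᵥ = e^{-v(g)}` on `k[[x]]` (with `‖0‖ᵥ = 0`). -/
noncomputable def xadicNorm {k : Type*} [Field k] (g : PowerSeries k) : ℝ :=
  open scoped Classical in
  if g = 0 then 0 else Real.exp (-(g.order.toNat : ℝ))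

/-! The `n`-th coefficient of `substXY f g` only involves the coefficients of
`g` below `n + 1`, since `X ^ m ∣ g₁ - g₀` implies `X ^ m ∣ g₁ ^ e - g₀ ^ e`. So substitution
does not lower the valuation of a difference, and the antiderivative raises it by one. -/

section

variable {k : Type*} [Field k]

theorem X_pow_dvd_substXY_sub (f : MvPowerSeries (Fin 2) k) {g₀ g₁ : PowerSeries k} {n : ℕ}
    (h : X ^ n ∣ g₁ - g₀) : X ^ n ∣ substXY f g₁ - substXY f g₀ := by
  refine X_pow_dvd_iff.mpr fun m hm => ?_
  rw [map_sub, sub_eq_zero, substXY, substXY, coeff_mk, coeff_mk]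
  refine Finset.sum_congr rfl fun p _ => congrArg _ ?_
  have hpow : X ^ n ∣ g₁ ^ p.2 - g₀ ^ p.2 := h.trans (sub_dvd_pow_sub_pow _ _ _)
  exact sub_eq_zero.mp (X_pow_dvd_iff.mp hpow _ (by omega))

theorem formalAntideriv_sub (g₀ g₁ : PowerSeries k) :
    formalAntideriv (g₁ - g₀) = formalAntideriv g₁ - formalAntideriv g₀ := by
  ext n
  simp only [formalAntideriv, coeff_mk, map_sub]
  split_ifs <;> simp [sub_div]

theorem X_pow_succ_dvd_formalAntideriv {g : PowerSeries k} {n : ℕ} (h : X ^ n ∣ g) :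
    X ^ (n + 1) ∣ formalAntideriv g := by
  refine X_pow_dvd_iff.mpr fun m hm => ?_
  simp only [formalAntideriv, coeff_mk]
  split_ifs
  · rfl
  · rw [X_pow_dvd_iff.mp h (m - 1) (by omega), zero_div]

theorem xadicNorm_le_of_X_pow_dvd {g : PowerSeries k} {n : ℕ} (h : X ^ n ∣ g) :
    xadicNorm g ≤ Real.exp (-n) := by
  unfold xadicNorm
  split_ifs with hg
  · positivity
  · have hn : (n : ℕ∞) ≤ g.order := nat_le_order g n (X_pow_dvd_iff.mp h)
    rw [← coe_toNat_order hg, Nat.cast_le] at hn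
    gcongr

end

theorem antideriv_subst_contraction_general {k : Type*} [Field k]
    (f : MvPowerSeries (Fin 2) k) (y₀ y₁ : PowerSeries k) :
    xadicNorm (formalAntideriv (substXY f y₁) - formalAntideriv (substXY f y₀)) ≤
      (Real.exp 1)⁻¹ * xadicNorm (y₁ - y₀) := by
  obtain hy | hy := eq_or_ne (y₁ - y₀) 0
  · simp [sub_eq_zero.mp hy, xadicNorm]
  set d := (y₁ - y₀).order.toNat
  have hΔ : X ^ (d + 1) ∣ formalAntideriv (substXY f y₁) - formalAntideriv (substXY f y₀) := by
    rw [← formalAntideriv_sub]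
    exact X_pow_succ_dvd_formalAntideriv (X_pow_dvd_substXY_sub f X_pow_order_dvd)
  calc _ ≤ Real.exp (-(d + 1 : ℕ)) := xadicNorm_le_of_X_pow_dvd hΔ
    _ = (Real.exp 1)⁻¹ * Real.exp (-d) := by
      rw [← Real.exp_neg, ← Real.exp_add]
      push_cast
      ring_nf
    _ = (Real.exp 1)⁻¹ * xadicNorm (y₁ - y₀) := by rw [xadicNorm, if_neg hy]

/-- The map `y ↦ ∫₀ˣ f(α, y) dα` is a contraction on `x·k[[x]]` with contraction
constant `e⁻¹` for the `x`-adic norm. -/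
theorem antideriv_subst_contraction {k : Type*} [Field k] [CharZero k]
    (f : MvPowerSeries (Fin 2) k) (y₀ y₁ : PowerSeries k)
    (h₀ : PowerSeries.constantCoeff y₀ = 0) (h₁ : PowerSeries.constantCoeff y₁ = 0) :
    xadicNorm (formalAntideriv (substXY f y₁) - formalAntideriv (substXY f y₀)) ≤
      (Real.exp 1)⁻¹ * xadicNorm (y₁ - y₀) :=
  antideriv_subst_contraction_general f y₀ y₁
end

section
/- Let $k$ be a field of characteristic $0$ and $a \in k$. If the binomial power series $(1+x)^a = \sum_{n \ge 0} \binom{a}{n} x^n$ is algebraic over the polynomial ring $k[x]$ (i.e. satisfies a nonzero polynomial relation with coefficients in $k[x]$), then $a$ is rational, i.e. $a$ lies in the prime field $\mathbb{Q} \subseteq k$. -/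
open PowerSeries Polynomial

/-- The generalized binomial coefficient `a(a-1)⋯(a-n+1)/n!`. -/
noncomputable def genBinom {k : Type*} [Field k] (a : k) (n : ℕ) : k :=
  (∏ i ∈ Finset.range n, (a - (i : k))) / (n.factorial : k)

/-- The binomial power series `(1+x)^a = ∑_{n ≥ 0} (a choose n) xⁿ`. -/
noncomputable def binomSeries {k : Type*} [Field k] (a : k) : PowerSeries k :=
  PowerSeries.mk fun n => genBinom a n

/-! If `P(f) = 0` for `f = (1+x)^a`, apply the derivation `(1+x) d/dx`: since `(1+x) f' = a f`, it
sends `c fʲ` to `((1+x) c' + j a c) fʲ`, so it produces a second relation with the same degree.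
Eliminating the leading coefficient between the two gives a relation of smaller degree, unless
they are proportional. Proportionality of the coefficients of `Tⁿ` and `Tᵐ` (`m < n`, `cₘ ≠ 0`)
says `(1+x) W(cₙ, cₘ) = (n - m) a cₙ cₘ`, and comparing orders of vanishing at `x = -1` shows
that `(n - m) a` is an integer. -/

section Binom

variable {k : Type*} [Field k]

lemma binomSeries_ne_zero (a : k) : binomSeries a ≠ 0 := fun h => by
  simpa [binomSeries, genBinom] using congrArg (PowerSeries.coeff 0) h

variable [CharZero k]

lemma genBinom_succ_mul (a : k) (n : ℕ) :
    genBinom a (n + 1) * (n + 1) = (a - n) * genBinom a n := by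
  have hn : (n : k) + 1 ≠ 0 := Nat.cast_add_one_ne_zero n
  have hfac : (n.factorial : k) ≠ 0 := Nat.cast_ne_zero.mpr n.factorial_ne_zero
  simp only [genBinom, Finset.prod_range_succ, Nat.factorial_succ, Nat.cast_mul, Nat.cast_add,
    Nat.cast_one]
  field_simp

lemma binomSeries_ode (a : k) :
    ((Polynomial.X + 1 : k[X]) : k⟦X⟧) * d⁄dX k (binomSeries a) =
      (Polynomial.C a : k[X]) * binomSeries a := by
  ext n
  simp only [Polynomial.coe_add, Polynomial.coe_X, Polynomial.coe_one, Polynomial.coe_C,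
    add_mul, one_mul, map_add, PowerSeries.coeff_C_mul]
  cases n with
  | zero => simp [PowerSeries.coeff_derivative, binomSeries, genBinom]
  | succ n =>
    simp only [PowerSeries.coeff_succ_X_mul, PowerSeries.coeff_derivative, binomSeries,
      PowerSeries.coeff_mk]
    have h := genBinom_succ_mul a (n + 1)
    push_cast at h ⊢
    linear_combination h

end Binom

namespace Polynomial

section RootMultiplicity

variable {R : Type*} [CommRing R]

lemma X_sub_C_mul_derivative_pow_mul (r : R) (p : ℕ) (w : R[X]) :
    (X - C r) * derivative ((X - C r) ^ p * w) =
      (X - C r) ^ p * (C (p : R) * w + (X - C r) * derivative w) := by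
  rw [derivative_mul, derivative_X_sub_C_pow]
  cases p with
  | zero => simp
  | succ p => simp only [Nat.add_sub_cancel, pow_succ]; ring

variable [IsDomain R]

lemma eq_rootMultiplicity_sub_of_X_sub_C_mul_wronskian {u v : R[X]} (hu : u ≠ 0) (hv : v ≠ 0)
    {r b : R} (h : (X - C r) * wronskian u v = C b * (u * v)) :
    b = v.rootMultiplicity r - u.rootMultiplicity r := by
  -- With `u = (X - r)^p u₁` and `v = (X - r)^q v₁`, cancelling `(X - r)^(p+q)` and evaluating
  -- at `r` leaves `b u₁(r) v₁(r) = (q - p) u₁(r) v₁(r)`.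
  obtain ⟨u₁, hu₁, hu₁r⟩ := u.exists_eq_pow_rootMultiplicity_mul_and_not_dvd hu r
  obtain ⟨v₁, hv₁, hv₁r⟩ := v.exists_eq_pow_rootMultiplicity_mul_and_not_dvd hv r
  set p := u.rootMultiplicity r
  set q := v.rootMultiplicity r
  have hu' := X_sub_C_mul_derivative_pow_mul r p u₁
  have hv' := X_sub_C_mul_derivative_pow_mul r q v₁
  rw [← hu₁] at hu'
  rw [← hv₁] at hv'
  have hW : (X - C r) * wronskian u v =
      u * ((X - C r) * derivative v) - (X - C r) * derivative u * v := by
    rw [wronskian]; ring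
  rw [hW, hu', hv', hu₁, hv₁] at h
  have hcancel : (X - C r) ^ (p + q) *
        (C ((q : R) - p) * (u₁ * v₁) + (X - C r) * wronskian u₁ v₁) =
      (X - C r) ^ (p + q) * (C b * (u₁ * v₁)) := by
    rw [wronskian, map_sub]
    linear_combination h
  have hr := congrArg (eval r) (mul_left_cancel₀ (pow_ne_zero _ (X_sub_C_ne_zero r)) hcancel)
  simp only [eval_add, eval_mul, eval_C, eval_sub, eval_X, sub_self, zero_mul, add_zero] at hr
  have hne : eval r u₁ * eval r v₁ ≠ 0 :=
    mul_ne_zero (fun h0 => hu₁r (dvd_iff_isRoot.mpr h0)) (fun h0 => hv₁r (dvd_iff_isRoot.mpr h0))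
  exact (mul_right_cancel₀ hne hr).symm

end RootMultiplicity

lemma exists_lt_natDegree_coeff_ne_zero_of_eval₂_eq_zero {R S : Type*} [CommRing R] [CommRing S]
    [IsDomain S] {φ : R →+* S} (hφ : Function.Injective φ) {x : S} (hx : x ≠ 0) {P : R[X]}
    (hP : P ≠ 0) (hPx : eval₂ φ x P = 0) : ∃ m < P.natDegree, P.coeff m ≠ 0 := by
  by_contra! hlow
  have hmono : eval₂ φ x P = φ P.leadingCoeff * x ^ P.natDegree := by
    rw [eval₂_eq_sum_range]
    refine Finset.sum_eq_single_of_mem _ (Finset.self_mem_range_succ _) fun j hj hjn => ?_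
    rw [hlow j (lt_of_le_of_ne (Finset.mem_range_succ_iff.mp hj) hjn), map_zero, zero_mul]
  rw [hmono] at hPx
  exact mul_ne_zero ((map_ne_zero_iff φ hφ).mpr (leadingCoeff_ne_zero.mpr hP))
    (pow_ne_zero _ hx) hPx

section TwistedDerivative

variable {R : Type*} [CommRing R]

-- The derivation `s ∂ₓ + g T ∂_T` of `R[X][T]`.
noncomputable def twistedDerivative (s g : R[X]) (P : R[X][X]) : R[X][X] :=
  ∑ j ∈ Finset.range (P.natDegree + 1),
    monomial j (s * derivative (P.coeff j) + j * g * P.coeff j)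

lemma coeff_twistedDerivative (s g : R[X]) (P : R[X][X]) (m : ℕ) :
    (twistedDerivative s g P).coeff m = s * derivative (P.coeff m) + m * g * P.coeff m := by
  rw [twistedDerivative, finsetSum_coeff]
  simp only [coeff_monomial, Finset.sum_ite_eq', Finset.mem_range]
  split_ifs with hm
  · rfl
  · simp [coeff_eq_zero_of_natDegree_lt (by omega : P.natDegree < m)]

variable {s g : R[X]} {f : R⟦X⟧}

lemma mul_derivative_coe_mul_pow (hf : (s : R⟦X⟧) * d⁄dX R f = g * f) (c : R[X]) (j : ℕ) :
    (s : R⟦X⟧) * d⁄dX R (c * f ^ j) = ((s * derivative c + j * g * c : R[X]) : R⟦X⟧) * f ^ j := by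
  rw [Derivation.leibniz, Derivation.leibniz_pow, PowerSeries.derivative_coe]
  cases j with
  | zero => simp
  | succ j =>
    have hj : ((j : R[X]) : R⟦X⟧) = j := map_natCast coeToPowerSeries.ringHom j
    simp only [Nat.add_sub_cancel, smul_eq_mul, nsmul_eq_mul]
    push_cast [hj]
    linear_combination (c * (j + 1) * f ^ j : R⟦X⟧) * hf

lemma eval₂_twistedDerivative (hf : (s : R⟦X⟧) * d⁄dX R f = g * f) (P : R[X][X]) :
    eval₂ coeToPowerSeries.ringHom f (twistedDerivative s g P) =
      s * d⁄dX R (eval₂ coeToPowerSeries.ringHom f P) := by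
  rw [twistedDerivative, eval₂_finsetSum, eval₂_eq_sum_range, map_sum, Finset.mul_sum]
  refine Finset.sum_congr rfl fun j _ => ?_
  rw [eval₂_monomial, coeToPowerSeries.ringHom_apply, coeToPowerSeries.ringHom_apply,
    mul_derivative_coe_mul_pow hf]

variable [IsDomain R]

theorem exists_mul_wronskian_eq_of_eval₂_eq_zero (hf : (s : R⟦X⟧) * d⁄dX R f = g * f)
    (hf0 : f ≠ 0) {P : R[X][X]} (hP : P ≠ 0) (hPf : eval₂ coeToPowerSeries.ringHom f P = 0) :
    ∃ d : ℕ, 0 < d ∧ ∃ u v : R[X], u ≠ 0 ∧ v ≠ 0 ∧ s * wronskian u v = d * g * (u * v) := by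
  induction hn : P.natDegree using Nat.strong_induction_on generalizing P with
  | _ n ih =>
  set δ := twistedDerivative s g P
  set Q := C (P.coeff n) * δ - C (δ.coeff n) * P
  have hQ_coeff (m : ℕ) : Q.coeff m = P.coeff n * δ.coeff m - δ.coeff n * P.coeff m := by
    simp only [Q, coeff_sub, coeff_C_mul]
  have hQf : eval₂ coeToPowerSeries.ringHom f Q = 0 := by
    simp only [Q, δ, eval₂_sub, eval₂_mul, eval₂_C, eval₂_twistedDerivative hf, hPf, map_zero,
      mul_zero, sub_zero]
  have hQ_deg : Q.degree < n := by
    refine (degree_lt_iff_coeff_zero _ _).mpr fun m hm => ?_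
    rw [hQ_coeff]
    rcases hm.eq_or_lt with rfl | hlt
    · ring
    · have hPm : P.coeff m = 0 := coeff_eq_zero_of_natDegree_lt (hn.trans_lt hlt)
      rw [coeff_twistedDerivative, hPm, derivative_zero]
      ring
  by_cases hQ0 : Q = 0
  · obtain ⟨m, hm, hcm⟩ := exists_lt_natDegree_coeff_ne_zero_of_eval₂_eq_zero
      (coe_injective R) hf0 hP hPf
    rw [hn] at hm
    have hcn : P.coeff n ≠ 0 := hn ▸ leadingCoeff_ne_zero.mpr hP
    refine ⟨n - m, by omega, P.coeff n, P.coeff m, hcn, hcm, ?_⟩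
    have h := hQ_coeff m
    rw [hQ0, coeff_zero, coeff_twistedDerivative, coeff_twistedDerivative] at h
    rw [wronskian, Nat.cast_sub hm.le]
    linear_combination -h
  · exact ih _ ((natDegree_lt_iff_degree_lt hQ0).mpr hQ_deg) hQ0 hQf rfl

end TwistedDerivative

end Polynomial

/-- If the binomial series `(1+x)^a` is algebraic over `k[x]` (`k` of characteristic
zero), then `a` is rational. -/
theorem binomSeries_algebraic_imp_rational {k : Type*} [Field k] [CharZero k] (a : k)
    (h : ∃ P : Polynomial (Polynomial k), P ≠ 0 ∧
      Polynomial.eval₂ (Polynomial.coeToPowerSeries.ringHom) (binomSeries a) P = 0) :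
    ∃ q : ℚ, a = (q : k) := by
  obtain ⟨P, hP, hPf⟩ := h
  obtain ⟨d, hd, u, v, hu, hv, huv⟩ :=
    exists_mul_wronskian_eq_of_eval₂_eq_zero (binomSeries_ode a) (binomSeries_ne_zero a) hP hPf
  have hX : (Polynomial.X + 1 : k[X]) = Polynomial.X - Polynomial.C (-1) := by simp
  rw [hX, ← Polynomial.C_eq_natCast, ← Polynomial.C_mul] at huv
  have hda := eq_rootMultiplicity_sub_of_X_sub_C_mul_wronskian hu hv huv
  have hd0 : (d : k) ≠ 0 := Nat.cast_ne_zero.mpr hd.ne'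
  refine ⟨((v.rootMultiplicity (-1) : ℚ) - u.rootMultiplicity (-1)) / d, ?_⟩
  push_cast
  rw [← hda]
  field_simp
end

section
/- Let $k$ be a field of characteristic $p > 0$ and $a \in k$. The formal differential equation $y' = a \cdot \frac{1+y}{1+x}$ has a solution $y \in k[[x]]$ with zero constant term if and only if $a$ lies in the prime field $\mathbb{F}_p \subseteq k$ (in which case, writing $a$ as the image of an integer $0 \le m < p$, the polynomial $(1+x)^m - 1$ is a solution). -/
/-!
Put `z = 1 + y`; the equation becomes `(1 + x) z' = a z`, and comparing coefficients of `x ^ n`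
gives `(n + 1) z_{n+1} = (a - n) z_n`, hence `n! z_n = a (a - 1) ⋯ (a - n + 1) z_0`.
For `n = p` the left side vanishes while `z_0 = 1`, so `a` is a root of `∏_{j < p} (a - j)`,
i.e. `a ∈ 𝔽_p`. Conversely `(1 + x) ((1 + x) ^ m)' = m (1 + x) ^ m`.
-/

open PowerSeries Finset
open scoped Nat

namespace PowerSeries

section CommRing

variable {R : Type*} [CommRing R] {a : R} {z : R⟦X⟧}

theorem succ_mul_coeff_succ_of_one_add_X_mul_derivative (hz : (1 + X) * d⁄dX R z = C a * z)
    (n : ℕ) : (n + 1) * coeff (n + 1) z = (a - n) * coeff n z := by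
  have h := congrArg (coeff n) hz
  rw [add_mul, one_mul, map_add, coeff_C_mul, coeff_derivative] at h
  cases n with
  | zero => simpa [mul_comm] using h
  | succ n =>
    rw [coeff_succ_X_mul, coeff_derivative] at h
    push_cast at h ⊢
    linear_combination h

theorem factorial_mul_coeff_of_one_add_X_mul_derivative (hz : (1 + X) * d⁄dX R z = C a * z)
    (n : ℕ) : n ! * coeff n z = (∏ j ∈ range n, (a - j)) * constantCoeff z := by
  induction n with
  | zero => simp
  | succ n ih =>
    rw [Nat.factorial_succ, prod_range_succ]
    push_cast
    linear_combination (n ! : R) * succ_mul_coeff_succ_of_one_add_X_mul_derivative hz n +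
      (a - n) * ih

theorem exists_lt_eq_natCast_of_one_add_X_mul_derivative [IsDomain R] (p : ℕ) [CharP R p]
    (hp : p ≠ 0) (hz : (1 + X) * d⁄dX R z = C a * z) (hz₀ : constantCoeff z ≠ 0) :
    ∃ m < p, a = m := by
  have hfact : (p ! : R) = 0 :=
    (CharP.cast_eq_zero_iff R p _).2 (Nat.dvd_factorial (Nat.pos_of_ne_zero hp) le_rfl)
  have hprod := factorial_mul_coeff_of_one_add_X_mul_derivative hz p
  rw [hfact, zero_mul, eq_comm, mul_eq_zero, prod_eq_zero_iff] at hprod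
  obtain ⟨m, hm, ham⟩ := hprod.resolve_right hz₀
  exact ⟨m, mem_range.1 hm, sub_eq_zero.1 ham⟩

theorem one_add_X_mul_derivative_one_add_X_pow (m : ℕ) :
    (1 + X) * d⁄dX R ((1 + X) ^ m) = C (m : R) * (1 + X) ^ m := by
  rw [derivative_pow, map_add, derivative_one, derivative_X, map_natCast]
  cases m with
  | zero => simp
  | succ m => rw [add_tsub_cancel_right]; ring

end CommRing

theorem derivative_eq_C_mul_one_add_mul_inv_iff {k : Type*} [Field k] {a : k} {y : k⟦X⟧} :
    d⁄dX k y = C a * (1 + y) * (1 + X)⁻¹ ↔ (1 + X) * d⁄dX k (1 + y) = C a * (1 + y) := by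
  rw [eq_mul_inv_iff_mul_eq (by simp), map_add, derivative_one, zero_add, mul_comm]

end PowerSeries

/-- In characteristic `p > 0`, the formal ODE `y' = a (1+y)/(1+x)` has a solution
`y ∈ k[[x]]` with zero constant term if and only if `a` lies in the prime field
`𝔽_p ⊆ k`; in that case, writing `a` as the image of `0 ≤ m < p`, the polynomial
`(1+x)^m - 1` is a solution. -/
theorem ode_mult_solvable_iff_Fp {k : Type*} [Field k] (p : ℕ) [Fact p.Prime]
    [CharP k p] (a : k) :
    ((∃ y : PowerSeries k, PowerSeries.constantCoeff y = 0 ∧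
        y.derivativeFun = PowerSeries.C a * (1 + y) * (1 + PowerSeries.X)⁻¹) ↔
      ∃ m : ℕ, m < p ∧ a = (m : k)) ∧
    ∀ m : ℕ, m < p → a = (m : k) →
      PowerSeries.constantCoeff ((1 + PowerSeries.X : PowerSeries k) ^ m - 1) = 0 ∧
      ((1 + PowerSeries.X : PowerSeries k) ^ m - 1).derivativeFun =
        PowerSeries.C a * (1 + ((1 + PowerSeries.X : PowerSeries k) ^ m - 1)) *
          (1 + PowerSeries.X)⁻¹ := by
  have solution (m : ℕ) (ha : a = m) : constantCoeff ((1 + X : k⟦X⟧) ^ m - 1) = 0 ∧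
      d⁄dX k ((1 + X) ^ m - 1) = C a * (1 + ((1 + X) ^ m - 1)) * (1 + X)⁻¹ := by
    refine ⟨by simp, derivative_eq_C_mul_one_add_mul_inv_iff.2 ?_⟩
    rw [add_sub_cancel, ha, one_add_X_mul_derivative_one_add_X_pow]
  refine ⟨⟨fun ⟨y, hy₀, hy⟩ => ?_, fun ⟨m, _, ha⟩ => ⟨_, solution m ha⟩⟩, fun m _ => solution m⟩
  exact exists_lt_eq_natCast_of_one_add_X_mul_derivative p (Fact.out : p.Prime).ne_zero
    (derivative_eq_C_mul_one_add_mul_inv_iff.1 hy) (by simp [hy₀])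
end

section
/- Let $k$ be a field of characteristic $p > 0$, $a \in k$, and let $y_1, y_2 \in k[[x]]$ be two solutions with zero constant term of the formal differential equation $y' = a \cdot \frac{1+y}{1+x}$. Then the formal derivative of $\frac{y_1+1}{y_2+1}$ is zero; consequently $\frac{y_1+1}{y_2+1}$ lies in the subring $k[[x^p]]$ of $k[[x]]$. -/
/-!
If `u' = f u` and `v' = f v`, the quotient rule gives `(u / v)' = f u / v - f u v / v² = 0`
(trivially so when `v` is not invertible, since then `v⁻¹ = 0` in `k⟦X⟧`).
In characteristic `p` the coefficient of `x^n` in a series with zero derivative is killed by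
the factor `n`, which is a unit in `k` unless `p ∣ n`.
-/

open PowerSeries

namespace PowerSeries

theorem inv_mul_self_mul_inv {k : Type*} [Field k] (v : k⟦X⟧) : v⁻¹ * v * v⁻¹ = v⁻¹ := by
  by_cases hv : constantCoeff v = 0
  · rw [inv_eq_zero.mpr hv, zero_mul, zero_mul]
  · rw [PowerSeries.inv_mul_cancel v hv, one_mul]

theorem derivative_mul_inv_eq_zero {k : Type*} [Field k] {f u v : k⟦X⟧}
    (hu : d⁄dX k u = f * u) (hv : d⁄dX k v = f * v) : d⁄dX k (u * v⁻¹) = 0 := by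
  rw [Derivation.leibniz, derivative_inv', hu, hv, smul_eq_mul, smul_eq_mul]
  linear_combination (-(u * f)) * inv_mul_self_mul_inv v

theorem coeff_eq_zero_of_derivative_eq_zero {R : Type*} [CommRing R] [NoZeroDivisors R]
    (p : ℕ) [CharP R p] {f : R⟦X⟧} (hf : d⁄dX R f = 0) {n : ℕ} (hn : ¬ p ∣ n) :
    coeff n f = 0 := by
  obtain _ | m := n
  · exact absurd (dvd_zero p) hn
  · have hm : ((m + 1 : ℕ) : R) ≠ 0 := by rwa [Ne, CharP.cast_eq_zero_iff R p]
    have hcoeff := coeff_derivative f m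
    rw [hf, map_zero, eq_comm, mul_eq_zero] at hcoeff
    exact hcoeff.resolve_right (by exact_mod_cast hm)

end PowerSeries

theorem quotient_of_solutions_in_xp_general {k : Type*} [Field k] (p : ℕ)
    [CharP k p] (a : k) (y₁ y₂ : PowerSeries k)
    (h₁ : y₁.derivativeFun = PowerSeries.C a * (1 + y₁) * (1 + PowerSeries.X)⁻¹)
    (h₂ : y₂.derivativeFun = PowerSeries.C a * (1 + y₂) * (1 + PowerSeries.X)⁻¹) :
    ((y₁ + 1) * (y₂ + 1)⁻¹).derivativeFun = 0 ∧
    ∀ n : ℕ, ¬ p ∣ n → PowerSeries.coeff n ((y₁ + 1) * (y₂ + 1)⁻¹) = 0 := by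
  have linear_of_solution (y : k⟦X⟧) (hy : y.derivativeFun = C a * (1 + y) * (1 + X)⁻¹) :
      d⁄dX k (y + 1) = C a * (1 + X)⁻¹ * (y + 1) := by
    rw [map_add, derivative_one, add_zero]
    change y.derivativeFun = _
    rw [hy]
    ring
  have hq := derivative_mul_inv_eq_zero (linear_of_solution y₁ h₁) (linear_of_solution y₂ h₂)
  exact ⟨hq, fun n hn ↦ coeff_eq_zero_of_derivative_eq_zero p hq hn⟩

/-- If `y₁, y₂ ∈ x·k[[x]]` (char `k = p > 0`) both solve `y' = a (1+y)/(1+x)`, then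
`(y₁+1)/(y₂+1)` has zero formal derivative, hence lies in the subring `k[[x^p]]`. -/
theorem quotient_of_solutions_in_xp {k : Type*} [Field k] (p : ℕ) [Fact p.Prime]
    [CharP k p] (a : k) (y₁ y₂ : PowerSeries k)
    (h₁0 : PowerSeries.constantCoeff y₁ = 0)
    (h₂0 : PowerSeries.constantCoeff y₂ = 0)
    (h₁ : y₁.derivativeFun = PowerSeries.C a * (1 + y₁) * (1 + PowerSeries.X)⁻¹)
    (h₂ : y₂.derivativeFun = PowerSeries.C a * (1 + y₂) * (1 + PowerSeries.X)⁻¹) :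
    ((y₁ + 1) * (y₂ + 1)⁻¹).derivativeFun = 0 ∧
    ∀ n : ℕ, ¬ p ∣ n → PowerSeries.coeff n ((y₁ + 1) * (y₂ + 1)⁻¹) = 0 :=
  quotient_of_solutions_in_xp_general p a y₁ y₂ h₁ h₂
end
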